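/- Let a ≤ 0, K₁ ≤ K₂, and let b : ℝ × ℝ → ℝ satisfy −a K₁ ≤ b(t, y) ≤ −a K₂ for all (t, y). Let h > 0 and set z = a h; assume z satisfies the coefficient inequality e^z φ_1(z) + (3/2) e^z φ_2(z) − 2 φ_2(z) + e^z φ_3(z) − 2 φ_3(z) ≥ 0 (which holds whenever h ≤ β₃/|a| for a constant β₃ ≈ 0.331). Let t_n = n h and let (y_n)_{n ≥ 0} satisfy, for n ≥ 2, the EAB₃ recursion y_{n+1} = e^{a h} y_n + h ( φ_1(a h) γ_{n1} + φ_2(a h) γ_{n2} + φ_3(a h) γ_{n3} ), where b_j = b(t_j, y_j), γ_{n1} = b_n, γ_{n2} = (3/2) b_n − 2 b_{n−1} + (1/2) b_{n−2}, γ_{n3} = b_n − 2 b_{n−1} + b_{n−2}. Set C_p = e^{a h} + 2 a h (φ_2(a h) + φ_3(a h)). If C_p K₁ ≤ e^{a h} y_2 − 2 h (φ_2(a h) + φ_3(a h)) b_1 ≤ C_p K₂, then K₁ ≤ y_n ≤ K₂ for all n ≥ 3. -/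

import Mathlib

/-!
Write `z = a h`, `E = e^z`, `B_n = h b(t_n, y_n)` and `c₁ = φ₁ + 3/2 φ₂ + φ₃`, `c₂ = φ₂/2 + φ₃`, so the
scheme reads `y_{n+1} = E y_n + c₁ B_n - 2(φ₂ + φ₃) B_{n-1} + c₂ B_{n-2}`, with every `B_n` in
`[-z K₁, -z K₂]`. The only coefficient of indefinite sign is that of `B_{n-1}`, so it is absorbed into
`Q_n = E y_n - 2(φ₂ + φ₃) B_{n-1}`. Then
`Q_{n+1} = E Q_n + (E c₁ - 2(φ₂ + φ₃)) B_n + E c₂ B_{n-2}` and `y_{n+1} = Q_n + c₁ B_n + c₂ B_{n-2}` are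
combinations with nonnegative weights (by the coefficient inequality and `φ₂, φ₃ ≥ 0` for `z ≤ 0`),
and `z φ₁ = E - 1` shows that they map `Q_n ∈ [C_p K₁, C_p K₂]` to `Q_{n+1} ∈ [C_p K₁, C_p K₂]` and
to `y_{n+1} ∈ [K₁, K₂]`.
-/

/-- The exponential propagation functions φ_j: φ_0(z) = e^z,
φ_{j+1}(z) = (φ_j(z) - 1/j!)/z for z ≠ 0, and φ_j(0) = 1/j!. -/
noncomputable def phi : ℕ → ℝ → ℝ
  | 0, z => Real.exp z
  | j + 1, z =>
      if z = 0 then 1 / (Nat.factorial (j + 1)) else (phi j z - 1 / (Nat.factorial j)) / z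

open Set Finset

lemma phi_apply_zero (j : ℕ) : phi j 0 = 1 / j.factorial := by
  cases j <;> simp [phi]

lemma mul_phi_succ (j : ℕ) (z : ℝ) : z * phi (j + 1) z = phi j z - 1 / j.factorial := by
  rcases eq_or_ne z 0 with rfl | hz
  · simp [phi_apply_zero]
  · rw [phi, if_neg hz]
    field_simp

lemma mul_phi_one (z : ℝ) : z * phi 1 z = Real.exp z - 1 := by
  simpa [phi] using mul_phi_succ 0 z

lemma pow_mul_phi (j : ℕ) (z : ℝ) :
    z ^ j * phi j z = Real.exp z - ∑ k ∈ range j, z ^ k / k.factorial := by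
  induction j with
  | zero => simp [phi]
  | succ j ih =>
    rw [sum_range_succ, pow_succ, mul_assoc, mul_phi_succ, mul_sub, ih]
    ring

lemma phi_nonneg_iff {z : ℝ} (hz : z ≠ 0) (j : ℕ) :
    0 ≤ phi j z ↔ 0 ≤ z ^ j * (Real.exp z - ∑ k ∈ range j, z ^ k / k.factorial) := by
  rw [← pow_mul_phi, ← mul_assoc, ← sq, mul_nonneg_iff_of_pos_left (by positivity)]

lemma exp_le_one_add_add_sq_div_two {z : ℝ} (hz : z ≤ 0) : Real.exp z ≤ 1 + z + z ^ 2 / 2 := by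
  have hexp : 1 + -z + (-z) ^ 2 / 2 ≤ Real.exp (-z) := Real.quadratic_le_exp_of_nonneg (by linarith)
  have hinv : Real.exp z * Real.exp (-z) = 1 := by rw [← Real.exp_add, add_neg_cancel, Real.exp_zero]
  -- `(1 - z + z²/2)(1 + z + z²/2) = 1 + z⁴/4 ≥ 1`
  nlinarith [Real.exp_pos z, sq_nonneg (z ^ 2), mul_le_mul_of_nonneg_left hexp (Real.exp_pos z).le]

lemma phi_two_nonneg {z : ℝ} (hz : z ≤ 0) : 0 ≤ phi 2 z := by
  rcases hz.lt_or_eq with hz | rfl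
  · have htaylor : ∑ k ∈ range 2, z ^ k / k.factorial = 1 + z := by norm_num [sum_range_succ]
    rw [phi_nonneg_iff hz.ne, htaylor]
    exact mul_nonneg (sq_nonneg z) (by linarith [Real.add_one_le_exp z])
  · simp [phi_apply_zero]

lemma phi_three_nonneg {z : ℝ} (hz : z ≤ 0) : 0 ≤ phi 3 z := by
  rcases hz.lt_or_eq with hz | rfl
  · have htaylor : ∑ k ∈ range 3, z ^ k / k.factorial = 1 + z + z ^ 2 / 2 := by
      norm_num [sum_range_succ]
    rw [phi_nonneg_iff hz.ne, htaylor]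
    exact mul_nonneg_of_nonpos_of_nonpos (Odd.pow_nonpos (by decide) hz.le)
      (by linarith [exp_le_one_add_add_sq_div_two hz.le])
  · simp [phi_apply_zero]

lemma nonneg_combination_mem_Icc {γ α β c d e x u v K₁ K₂ : ℝ} (hγ : 0 ≤ γ) (hα : 0 ≤ α)
    (hβ : 0 ≤ β) (he : γ * c + (α + β) * d = e) (hx : x ∈ Icc (c * K₁) (c * K₂))
    (hu : u ∈ Icc (d * K₁) (d * K₂)) (hv : v ∈ Icc (d * K₁) (d * K₂)) :
    γ * x + α * u + β * v ∈ Icc (e * K₁) (e * K₂) := by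
  subst he
  constructor
  · linarith [mul_le_mul_of_nonneg_left hx.1 hγ, mul_le_mul_of_nonneg_left hu.1 hα,
      mul_le_mul_of_nonneg_left hv.1 hβ]
  · linarith [mul_le_mul_of_nonneg_left hx.2 hγ, mul_le_mul_of_nonneg_left hu.2 hα,
      mul_le_mul_of_nonneg_left hv.2 hβ]

section EAB3

variable {z E p₁ p₂ p₃ K₁ K₂ : ℝ} {y B : ℕ → ℝ}

lemma eab3_carry_mem_Icc (hz : z * p₁ = E - 1) (hE : 0 ≤ E) (hp₂ : 0 ≤ p₂) (hp₃ : 0 ≤ p₃)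
    (hcoef : 0 ≤ E * (p₁ + 3 / 2 * p₂ + p₃) - 2 * (p₂ + p₃))
    (hB : ∀ n, B n ∈ Icc (-z * K₁) (-z * K₂))
    (hrec : ∀ n, 2 ≤ n → y (n + 1) = E * y n + (p₁ + 3 / 2 * p₂ + p₃) * B n
      - 2 * (p₂ + p₃) * B (n - 1) + (p₂ / 2 + p₃) * B (n - 2))
    (hinit : E * y 2 - 2 * (p₂ + p₃) * B 1 ∈
      Icc ((E + 2 * z * (p₂ + p₃)) * K₁) ((E + 2 * z * (p₂ + p₃)) * K₂)) :
    ∀ n, 2 ≤ n → E * y n - 2 * (p₂ + p₃) * B (n - 1) ∈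
      Icc ((E + 2 * z * (p₂ + p₃)) * K₁) ((E + 2 * z * (p₂ + p₃)) * K₂) := by
  intro n hn
  induction n, hn using Nat.le_induction with
  | base => exact hinit
  | succ n hn ih =>
    have hstep : E * y (n + 1) - 2 * (p₂ + p₃) * B (n + 1 - 1) =
        E * (E * y n - 2 * (p₂ + p₃) * B (n - 1))
          + (E * (p₁ + 3 / 2 * p₂ + p₃) - 2 * (p₂ + p₃)) * B n + E * (p₂ / 2 + p₃) * B (n - 2) := by
      rw [hrec n hn, Nat.add_sub_cancel]
      ring
    rw [hstep]
    refine nonneg_combination_mem_Icc hE hcoef (mul_nonneg hE (by linarith)) ?_ ih (hB n) (hB (n - 2))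
    linear_combination (-E) * hz

theorem eab3_mem_Icc (hz : z * p₁ = E - 1) (hE : 0 < E) (hp₂ : 0 ≤ p₂) (hp₃ : 0 ≤ p₃)
    (hcoef : 0 ≤ E * (p₁ + 3 / 2 * p₂ + p₃) - 2 * (p₂ + p₃))
    (hB : ∀ n, B n ∈ Icc (-z * K₁) (-z * K₂))
    (hrec : ∀ n, 2 ≤ n → y (n + 1) = E * y n + (p₁ + 3 / 2 * p₂ + p₃) * B n
      - 2 * (p₂ + p₃) * B (n - 1) + (p₂ / 2 + p₃) * B (n - 2))
    (hinit : E * y 2 - 2 * (p₂ + p₃) * B 1 ∈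
      Icc ((E + 2 * z * (p₂ + p₃)) * K₁) ((E + 2 * z * (p₂ + p₃)) * K₂)) :
    ∀ n, 3 ≤ n → y n ∈ Icc K₁ K₂ := by
  intro n hn
  obtain ⟨n, rfl⟩ : ∃ m, n = m + 1 := ⟨n - 1, by omega⟩
  have hn : 2 ≤ n := by omega
  have hc₁ : 0 ≤ p₁ + 3 / 2 * p₂ + p₃ := by
    have : 0 ≤ E * (p₁ + 3 / 2 * p₂ + p₃) := by linarith
    exact nonneg_of_mul_nonneg_right (by linarith) hE
  have hQ := eab3_carry_mem_Icc hz hE.le hp₂ hp₃ hcoef hB hrec hinit n hn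
  have hy : y (n + 1) = 1 * (E * y n - 2 * (p₂ + p₃) * B (n - 1))
      + (p₁ + 3 / 2 * p₂ + p₃) * B n + (p₂ / 2 + p₃) * B (n - 2) := by
    rw [hrec n hn]
    ring
  simpa [hy] using nonneg_combination_mem_Icc (e := 1) zero_le_one hc₁ (by linarith)
    (by linear_combination -hz) hQ (hB n) (hB (n - 2))

end EAB3

theorem eab3_invariant_region_general (a h K₁ K₂ : ℝ) (ha : a ≤ 0)
    (hh : 0 < h)
    (hcoef : 0 ≤ Real.exp (a * h) * phi 1 (a * h)
        + (3 / 2) * Real.exp (a * h) * phi 2 (a * h) - 2 * phi 2 (a * h)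
        + Real.exp (a * h) * phi 3 (a * h) - 2 * phi 3 (a * h))
    (b : ℝ → ℝ → ℝ) (hb : ∀ t y, -a * K₁ ≤ b t y ∧ b t y ≤ -a * K₂)
    (y : ℕ → ℝ)
    (hrec : ∀ n, 2 ≤ n →
      y (n + 1) = Real.exp (a * h) * y n
        + h * (phi 1 (a * h) * b ((n : ℝ) * h) (y n)
             + phi 2 (a * h) * ((3 / 2) * b ((n : ℝ) * h) (y n)
                 - 2 * b (((n - 1 : ℕ) : ℝ) * h) (y (n - 1))
                 + (1 / 2) * b (((n - 2 : ℕ) : ℝ) * h) (y (n - 2)))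
             + phi 3 (a * h) * (b ((n : ℝ) * h) (y n)
                 - 2 * b (((n - 1 : ℕ) : ℝ) * h) (y (n - 1))
                 + b (((n - 2 : ℕ) : ℝ) * h) (y (n - 2)))))
    (hinit₁ : (Real.exp (a * h) + 2 * (a * h) * (phi 2 (a * h) + phi 3 (a * h))) * K₁
        ≤ Real.exp (a * h) * y 2
          - 2 * h * (phi 2 (a * h) + phi 3 (a * h)) * b ((1 : ℝ) * h) (y 1))
    (hinit₂ : Real.exp (a * h) * y 2
          - 2 * h * (phi 2 (a * h) + phi 3 (a * h)) * b ((1 : ℝ) * h) (y 1)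
        ≤ (Real.exp (a * h) + 2 * (a * h) * (phi 2 (a * h) + phi 3 (a * h))) * K₂) :
    ∀ n, 3 ≤ n → K₁ ≤ y n ∧ y n ≤ K₂ := by
  have hz : a * h ≤ 0 := mul_nonpos_of_nonpos_of_nonneg ha hh.le
  have hB : ∀ n : ℕ, h * b (n * h) (y n) ∈ Icc (-(a * h) * K₁) (-(a * h) * K₂) := fun n =>
    ⟨by nlinarith [(hb (n * h) (y n)).1], by nlinarith [(hb (n * h) (y n)).2]⟩
  refine eab3_mem_Icc (mul_phi_one (a * h)) (Real.exp_pos _) (phi_two_nonneg hz)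
    (phi_three_nonneg hz) (by linarith) hB (fun n hn => by rw [hrec n hn]; ring) ?_
  simp only [Nat.cast_one] at hinit₁ hinit₂ ⊢
  constructor <;> linarith

/-- Preservation of the invariant region [K₁, K₂] by the EAB₃
scheme for y' = a y + b(t,y) with a ≤ 0 and −aK₁ ≤ b ≤ −aK₂, under the
coefficient inequality on z = a h and a condition on the initial data. -/
theorem eab3_invariant_region (a h K₁ K₂ : ℝ) (ha : a ≤ 0) (hK : K₁ ≤ K₂)
    (hh : 0 < h)
    (hcoef : 0 ≤ Real.exp (a * h) * phi 1 (a * h)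
        + (3 / 2) * Real.exp (a * h) * phi 2 (a * h) - 2 * phi 2 (a * h)
        + Real.exp (a * h) * phi 3 (a * h) - 2 * phi 3 (a * h))
    (b : ℝ → ℝ → ℝ) (hb : ∀ t y, -a * K₁ ≤ b t y ∧ b t y ≤ -a * K₂)
    (y : ℕ → ℝ)
    (hrec : ∀ n, 2 ≤ n →
      y (n + 1) = Real.exp (a * h) * y n
        + h * (phi 1 (a * h) * b ((n : ℝ) * h) (y n)
             + phi 2 (a * h) * ((3 / 2) * b ((n : ℝ) * h) (y n)
                 - 2 * b (((n - 1 : ℕ) : ℝ) * h) (y (n - 1))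
                 + (1 / 2) * b (((n - 2 : ℕ) : ℝ) * h) (y (n - 2)))
             + phi 3 (a * h) * (b ((n : ℝ) * h) (y n)
                 - 2 * b (((n - 1 : ℕ) : ℝ) * h) (y (n - 1))
                 + b (((n - 2 : ℕ) : ℝ) * h) (y (n - 2)))))
    (hinit₁ : (Real.exp (a * h) + 2 * (a * h) * (phi 2 (a * h) + phi 3 (a * h))) * K₁
        ≤ Real.exp (a * h) * y 2
          - 2 * h * (phi 2 (a * h) + phi 3 (a * h)) * b ((1 : ℝ) * h) (y 1))
    (hinit₂ : Real.exp (a * h) * y 2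
          - 2 * h * (phi 2 (a * h) + phi 3 (a * h)) * b ((1 : ℝ) * h) (y 1)
        ≤ (Real.exp (a * h) + 2 * (a * h) * (phi 2 (a * h) + phi 3 (a * h))) * K₂) :
    ∀ n, 3 ≤ n → K₁ ≤ y n ∧ y n ≤ K₂ :=
  eab3_invariant_region_general a h K₁ K₂ ha hh hcoef b hb y hrec hinit₁ hinit₂
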